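/- arXiv:2506.13511 — 2 statements merged into one kernel-verified Lean document; each statement's English description precedes it below -/
import Mathlib

section
/- Dyadic separation of shifted levels: Let N ≥ 1 and let E_1, …, E_N ∈ ℝ satisfy Δ := min_{i≠j} |E_i − E_j| > 0 (if N = 1, take Δ > 0 arbitrary). Let m ≥ 1 and set h_x = Δ / 2^{x+2} for x = 1, …, m. Then for all pairs (i,σ), (j,σ') ∈ {1,…,N} × {±1}^m with (i,σ) ≠ (j,σ'), one has | E_i − E_j + Σ_{x=1}^{m} (σ(x) − σ'(x)) h_x | ≥ Δ / 2^{m+2}. -/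
open Finset

private lemma abs_add_ge' (a b : ℝ) : |a| - |b| ≤ |a + b| := by
  have h := abs_add_le (a + b) (-b)
  simp only [add_neg_cancel_right, abs_neg] at h
  linarith

private lemma aux1 (e : ℕ → ℝ) : ∀ m : ℕ, (∀ x < m, |e x| ≤ 1) →
    |∑ x ∈ range m, e x / 2 ^ (x + 2)| ≤ 1 / 2 - 1 / 2 ^ (m + 1) := by
  intro m
  induction m with
  | zero => intro _; norm_num
  | succ n ih =>
    intro h
    rw [Finset.sum_range_succ]
    have h1 := ih (fun x hx => h x (Nat.lt_succ_of_lt hx))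
    have h2 : |e n / 2 ^ (n + 2)| ≤ 1 / 2 ^ (n + 2) := by
      rw [abs_div, abs_of_pos (by positivity : (0:ℝ) < 2 ^ (n + 2))]
      gcongr
      exact h n (Nat.lt_succ_self n)
    have key : (1:ℝ) / 2 - 1 / 2 ^ (n + 1) + 1 / 2 ^ (n + 2) = 1 / 2 - 1 / 2 ^ (n + 1 + 1) := by
      have hp : (2:ℝ) ^ (n + 1) ≠ 0 := by positivity
      rw [show n + 1 + 1 = n + 2 from rfl, pow_succ]
      field_simp
      ring
    calc |∑ x ∈ range n, e x / 2 ^ (x + 2) + e n / 2 ^ (n + 2)|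
        ≤ |∑ x ∈ range n, e x / 2 ^ (x + 2)| + |e n / 2 ^ (n + 2)| := abs_add_le _ _
      _ ≤ 1 / 2 - 1 / 2 ^ (n + 1) + 1 / 2 ^ (n + 2) := add_le_add h1 h2
      _ = 1 / 2 - 1 / 2 ^ (n + 1 + 1) := key

private lemma aux2 (e : ℕ → ℝ) : ∀ m : ℕ, (∀ x < m, e x = 1 ∨ e x = 0 ∨ e x = -1) →
    (∀ x < m, e x = 0) ∨ 1 / 2 ^ (m + 1) ≤ |∑ x ∈ range m, e x / 2 ^ (x + 2)| := by
  intro m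
  induction m with
  | zero => intro _; left; intro x hx; omega
  | succ n ih =>
    intro h
    rcases ih (fun x hx => h x (Nat.lt_succ_of_lt hx)) with hz | hb
    · have hs : ∑ x ∈ range n, e x / 2 ^ (x + 2) = 0 :=
        Finset.sum_eq_zero fun x hx => by
          rw [hz x (Finset.mem_range.mp hx)]; simp
      rcases h n (Nat.lt_succ_self n) with h1 | h0 | hm1
      · right
        rw [Finset.sum_range_succ, hs, zero_add, h1, abs_of_pos (by positivity)]
      · left
        intro x hx
        rcases Nat.lt_succ_iff_lt_or_eq.mp hx with hx' | hx'
        · exact hz x hx'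
        · rw [hx']; exact h0
      · right
        rw [Finset.sum_range_succ, hs, zero_add, hm1, abs_div, abs_neg, abs_one,
          abs_of_pos (by positivity : (0:ℝ) < 2 ^ (n + 2))]
    · right
      rw [Finset.sum_range_succ]
      have h2 : |e n / 2 ^ (n + 2)| ≤ 1 / 2 ^ (n + 2) := by
        rw [abs_div, abs_of_pos (by positivity : (0:ℝ) < 2 ^ (n + 2))]
        gcongr
        rcases h n (Nat.lt_succ_self n) with h' | h' | h' <;> rw [h'] <;> norm_num
      have key : (1:ℝ) / 2 ^ (n + 1 + 1) = 1 / 2 ^ (n + 1) - 1 / 2 ^ (n + 2) := by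
        have hp : (2:ℝ) ^ (n + 1) ≠ 0 := by positivity
        rw [show n + 1 + 1 = n + 2 from rfl, pow_succ]
        field_simp
        ring
      calc (1:ℝ) / 2 ^ (n + 1 + 1)
          = 1 / 2 ^ (n + 1) - 1 / 2 ^ (n + 2) := key
        _ ≤ |∑ x ∈ range n, e x / 2 ^ (x + 2)| - |e n / 2 ^ (n + 2)| := sub_le_sub hb h2
        _ ≤ |∑ x ∈ range n, e x / 2 ^ (x + 2) + e n / 2 ^ (n + 2)| := abs_add_ge' _ _

/-- **Dyadic separation of shifted levels.**
Let `E : Fin N → ℝ` (with `N ≥ 1`) and `Δ > 0` satisfy `Δ ≤ |E i - E j|` for all `i ≠ j`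
(which for `N ≥ 2` says `Δ` is at most the minimal gap, and for `N = 1` is vacuous).
With the dyadic fields `h x = Δ / 2^{x+2}` for the physical sites `x = 1,…,m`, any two
distinct pairs `(i,σ) ≠ (j,σ')` with `σ, σ' ∈ {±1}^m` satisfy
`|E i - E j + ∑_{x=1}^m (σ x - σ' x) h x| ≥ Δ / 2^{m+2}`. -/
theorem dyadic_separation_of_shifted_levels
    (N : ℕ) (hN : 1 ≤ N) (E : Fin N → ℝ) (Δ : ℝ) (hΔ : 0 < Δ)
    (hgap : ∀ i j : Fin N, i ≠ j → Δ ≤ |E i - E j|)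
    (m : ℕ) (hm : 1 ≤ m)
    (i j : Fin N) (σ σ' : Fin m → ℝ)
    (hσ : ∀ x, σ x = 1 ∨ σ x = -1) (hσ' : ∀ x, σ' x = 1 ∨ σ' x = -1)
    (hne : i ≠ j ∨ σ ≠ σ') :
    Δ / 2 ^ (m + 2) ≤
      |E i - E j + ∑ x : Fin m, (σ x - σ' x) * (Δ / 2 ^ ((x : ℕ) + 1 + 2))| := by
  set e : ℕ → ℝ := fun x => if hx : x < m then (σ ⟨x, hx⟩ - σ' ⟨x, hx⟩) / 2 else 0 with he
  have he_mem : ∀ x < m, e x = 1 ∨ e x = 0 ∨ e x = -1 := by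
    intro x hx
    simp only [he, dif_pos hx]
    rcases hσ ⟨x, hx⟩ with h1 | h1 <;> rcases hσ' ⟨x, hx⟩ with h2 | h2 <;>
      rw [h1, h2] <;> norm_num
  have he_abs : ∀ x < m, |e x| ≤ 1 := by
    intro x hx
    rcases he_mem x hx with h | h | h <;> rw [h] <;> norm_num
  have hsum : ∑ x : Fin m, (σ x - σ' x) * (Δ / 2 ^ ((x : ℕ) + 1 + 2)) =
      Δ * ∑ x ∈ range m, e x / 2 ^ (x + 2) := by
    rw [Finset.mul_sum, ← Fin.sum_univ_eq_sum_range (fun x => Δ * (e x / 2 ^ (x + 2))) m]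
    refine Finset.sum_congr rfl fun x _ => ?_
    simp only [he, dif_pos x.isLt, Fin.eta]
    have hp : (2:ℝ) ^ ((x:ℕ) + 2) ≠ 0 := by positivity
    rw [show (x:ℕ) + 1 + 2 = ((x:ℕ) + 2) + 1 from by ring, pow_succ]
    field_simp
  rw [hsum]
  set T := ∑ x ∈ range m, e x / 2 ^ (x + 2) with hT
  have hTub : |T| ≤ 1 / 2 - 1 / 2 ^ (m + 1) := aux1 e m he_abs
  by_cases hij : i = j
  · have hσne : σ ≠ σ' := by
      rcases hne with h | h
      · exact absurd hij h
      · exact h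
    rcases aux2 e m he_mem with hz | hb
    · exfalso
      apply hσne
      funext x
      have hzx := hz x x.isLt
      simp only [he, dif_pos x.isLt, Fin.eta] at hzx
      linarith
    · rw [hij, sub_self, zero_add, abs_mul, abs_of_pos hΔ]
      have h1 : Δ / 2 ^ (m + 2) ≤ Δ * (1 / 2 ^ (m + 1)) := by
        rw [mul_one_div]
        apply div_le_div_of_nonneg_left hΔ.le (by positivity)
        exact pow_le_pow_right₀ (by norm_num) (by omega)
      calc Δ / 2 ^ (m + 2) ≤ Δ * (1 / 2 ^ (m + 1)) := h1
        _ ≤ Δ * |T| := by gcongr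
  · have hgap' := hgap i j hij
    have hTb : Δ * |T| ≤ Δ * (1 / 2 - 1 / 2 ^ (m + 1)) := by gcongr
    have habs : |E i - E j| - |Δ * T| ≤ |E i - E j + Δ * T| := abs_add_ge' _ _
    have hΔT : |Δ * T| = Δ * |T| := by rw [abs_mul, abs_of_pos hΔ]
    have hsmall : Δ / 2 ^ (m + 2) ≤ Δ / 2 := by
      apply div_le_div_of_nonneg_left hΔ.le (by norm_num)
      have h21 : (2:ℝ) ^ 1 ≤ 2 ^ (m + 2) := pow_le_pow_right₀ (by norm_num) (by omega)
      simpa using h21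
    have hexp : Δ * (1 / 2 - 1 / 2 ^ (m + 1)) = Δ / 2 - Δ * (1 / 2 ^ (m + 1)) := by ring
    have hpos : 0 ≤ Δ * (1 / 2 ^ (m + 1)) := by positivity
    linarith
end

section
/- Counting configurations satisfying a nontrivial linear relation: Let F be a finite set with f = |F| ≥ 1 and let v ∈ ℝ^F have at least two nonzero entries. Then for every n ≥ 1, #{ (σ_j)_{j∈F} ∈ ({±1}^n)^F : for all x ∈ {1,…,n}, Σ_{j∈F} v_j σ_j(x) ∈ {−1, +1} } ≤ (2^f − 1)^n = (1 − 2^{−f})^n · 2^{nf}. Consequently, any class of multiconfigurations whose coefficient matrix has a row with at least two nonzero entries contains an exponentially small fraction of all |F|-tuples. -/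
open Finset in
lemma exists_forbidden_sign (F : Type) [Fintype F] [DecidableEq F]
    (v : F → ℝ) (j₁ j₂ : F) (hj : j₁ ≠ j₂) (hv₁ : v j₁ ≠ 0) (hv₂ : v j₂ ≠ 0) :
    ∃ ε : F → ℝ, (∀ j, ε j = 1 ∨ ε j = -1) ∧
      ¬ ((∑ j, v j * ε j) = 1 ∨ (∑ j, v j * ε j) = -1) := by
  by_contra hcon
  push_neg at hcon
  have H : ∀ ε : F → ℝ, (∀ j, ε j = 1 ∨ ε j = -1) →
      (∑ j, v j * ε j) = 1 ∨ (∑ j, v j * ε j) = -1 := hcon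
  set s : ℝ := ∑ j, v j with hs
  set a : ℝ := v j₁ with ha
  set b : ℝ := v j₂ with hb
  have flip1 : ∀ j0 : F, (∑ j, v j * (Function.update (fun _ => (1:ℝ)) j0 (-1)) j)
      = s - 2 * v j0 := by
    intro j0
    have key : ∀ j : F, v j * (Function.update (fun _ => (1:ℝ)) j0 (-1)) j
        = v j - (if j = j0 then 2 * v j0 else 0) := by
      intro j
      by_cases h : j = j0
      · rw [h]; simp [Function.update_apply]; ring
      · simp [Function.update_apply, h]
    rw [Finset.sum_congr rfl (fun j _ => key j), Finset.sum_sub_distrib,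
      Finset.sum_ite_eq' univ j0 (fun _ => 2 * v j0)]
    simp [hs]
  have flip2 : (∑ j, v j * (Function.update (Function.update (fun _ => (1:ℝ)) j₁ (-1)) j₂ (-1)) j)
      = s - 2 * a - 2 * b := by
    have key : ∀ j : F, v j * (Function.update (Function.update (fun _ => (1:ℝ)) j₁ (-1)) j₂ (-1)) j
        = v j - (if j = j₁ then 2 * v j₁ else 0) - (if j = j₂ then 2 * v j₂ else 0) := by
      intro j
      by_cases h1 : j = j₂
      · rw [h1]
        simp [Function.update_apply, (Ne.symm hj : j₂ ≠ j₁)]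
        ring
      · by_cases h2 : j = j₁
        · rw [h2]
          simp [Function.update_apply, hj]
          ring
        · simp [Function.update_apply, h1, h2]
    rw [Finset.sum_congr rfl (fun j _ => key j), Finset.sum_sub_distrib,
      Finset.sum_sub_distrib, Finset.sum_ite_eq' univ j₁ (fun _ => 2 * v j₁),
      Finset.sum_ite_eq' univ j₂ (fun _ => 2 * v j₂)]
    simp [hs, ha, hb]
  have sign1 : ∀ j0 j : F, (Function.update (fun _ => (1:ℝ)) j0 (-1)) j = 1 ∨
      (Function.update (fun _ => (1:ℝ)) j0 (-1)) j = -1 := by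
    intro j0 j
    by_cases h : j = j0 <;> simp [Function.update_apply, h]
  have sign2 : ∀ j : F,
      (Function.update (Function.update (fun _ => (1:ℝ)) j₁ (-1)) j₂ (-1)) j = 1
      ∨ (Function.update (Function.update (fun _ => (1:ℝ)) j₁ (-1)) j₂ (-1)) j = -1 := by
    intro j
    by_cases h1 : j = j₂
    · simp [Function.update_apply, h1]
    · by_cases h2 : j = j₁ <;> simp [Function.update_apply, h1, h2]
  have h0 := H (fun _ => 1) (fun _ => Or.inl rfl)
  have h1 := H _ (sign1 j₁); rw [flip1 j₁] at h1
  have h2 := H _ (sign1 j₂); rw [flip1 j₂] at h2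
  have h3 := H _ sign2; rw [flip2] at h3
  have h0' : s = 1 ∨ s = -1 := by simpa [hs, mul_one] using h0
  rw [← ha] at h1
  rw [← hb] at h2
  rcases h0' with h0'|h0' <;> rcases h1 with h1|h1 <;> rcases h2 with h2|h2 <;>
    rcases h3 with h3|h3 <;>
    first
      | exact hv₁ (by linarith)
      | exact hv₂ (by linarith)
      | linarith


/-- **Counting configurations satisfying a nontrivial linear relation.**
Let `F` be a finite set with `f = |F| ≥ 1` and let `v ∈ ℝ^F` have at least two nonzero
entries. Then the number of tuples `(σ_j)_{j∈F}` of sign vectors in `{±1}^n` such that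
`∑_j v_j σ_j(x) ∈ {−1,+1}` for every site `x` is at most `(2^f − 1)^n`. -/
theorem counting_nontrivial_linear_relation
    (F : Type) [Fintype F] (hF : 1 ≤ Fintype.card F)
    (v : F → ℝ) (j₁ j₂ : F) (hj : j₁ ≠ j₂) (hv₁ : v j₁ ≠ 0) (hv₂ : v j₂ ≠ 0)
    (n : ℕ) (hn : 1 ≤ n) :
    Nat.card {σ : F → Fin n → ℝ //
        (∀ j x, σ j x = 1 ∨ σ j x = -1) ∧
        ∀ x, (∑ j, v j * σ j x) = 1 ∨ (∑ j, v j * σ j x) = -1} ≤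
      (2 ^ Fintype.card F - 1) ^ n := by
  classical
  obtain ⟨ε, hεsign, hεbad⟩ := exists_forbidden_sign F v j₁ j₂ hj hv₁ hv₂
  set bε : F → Bool := fun j => decide (ε j = 1) with hbε
  -- injection into Fin n → {g : F → Bool // g ≠ bε}
  let T := {g : F → Bool // g ≠ bε}
  let Φ : {σ : F → Fin n → ℝ //
        (∀ j x, σ j x = 1 ∨ σ j x = -1) ∧
        ∀ x, (∑ j, v j * σ j x) = 1 ∨ (∑ j, v j * σ j x) = -1} → (Fin n → T) :=
    fun σ x => ⟨fun j => decide (σ.1 j x = 1), by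
      intro hg
      apply hεbad
      have hσε : ∀ j, σ.1 j x = ε j := by
        intro j
        have := congrFun hg j
        simp only [hbε, decide_eq_decide] at this
        rcases σ.2.1 j x with h|h <;> rcases hεsign j with h'|h'
        · rw [h, h']
        · exfalso; rw [h] at this; have := this.mp rfl; rw [h'] at this; norm_num at this
        · exfalso; rw [h] at this; have := this.mpr h'; norm_num at this
        · rw [h, h']
      have : (∑ j, v j * σ.1 j x) = ∑ j, v j * ε j :=
        Finset.sum_congr rfl (fun j _ => by rw [hσε j])
      rw [← this]
      exact σ.2.2 x⟩
  have hΦ : Function.Injective Φ := by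
    intro σ σ' h
    ext j x
    have := congrFun (congrArg Subtype.val (congrFun h x)) j
    simp only [Φ, decide_eq_decide] at this
    rcases σ.2.1 j x with h1|h1 <;> rcases σ'.2.1 j x with h2|h2
    · rw [h1, h2]
    · exfalso; rw [h1] at this; rw [this.mp rfl] at h2; norm_num at h2
    · exfalso; rw [h2] at this; rw [this.mpr rfl] at h1; norm_num at h1
    · rw [h1, h2]
  have hcard : Nat.card (Fin n → T) = (2 ^ Fintype.card F - 1) ^ n := by
    have hT : Nat.card T = 2 ^ Fintype.card F - 1 := by
      simp only [Nat.card_eq_fintype_card, T]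
      rw [Fintype.card_subtype_compl (p := fun g => g = bε)]
      simp [Fintype.card_fun]
    rw [Nat.card_fun]
    rw [← Nat.card_eq_fintype_card, hT, Nat.card_eq_fintype_card, Fintype.card_fin,
      Nat.card_eq_fintype_card]
  calc Nat.card _ ≤ Nat.card (Fin n → T) := Nat.card_le_card_of_injective Φ hΦ
    _ = _ := hcard
end
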